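/- Let g(y) = 1/(π √(y(1 − y))) for y ∈ (0, 1) be the invariant density of the logistic map at fully developed chaos. Then ∫_0^{1/4} g(y) dy = 1/3, ∫_{1/4}^{(5−√5)/8} g(y) dy = 1/15, ∫_{(5−√5)/8}^{3/4} g(y) dy = 4/15, ∫_{3/4}^{(5+√5)/8} g(y) dy = 2/15, and ∫_{(5+√5)/8}^{1} g(y) dy = 1/5. Consequently, the ordinal probabilities of the embedding-dimension-3 permutation patterns of the logistic map y_{k+1} = 4 y_k (1 − y_k) are (1/3, 1/15, 4/15, 2/15, 1/5, 0). -/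

import Mathlib

open Real MeasureTheory

/-- The logistic map at fully developed chaos. -/
noncomputable def logisticMap (y : ℝ) : ℝ := 4 * y * (1 - y)

/-- The invariant density of the logistic map at fully developed chaos. -/
noncomputable def logisticDensity (y : ℝ) : ℝ := 1 / (Real.pi * Real.sqrt (y * (1 - y)))

/-!
The increasing substitution `y = sin² (π t / 2) = (1 - cos (π t)) / 2` conjugates the tent map
`T t = 1 - |1 - 2 t|` on `[0, 1]` to the logistic map, and it carries Lebesgue measure to the
invariant measure: `arccos (1 - 2 y) / π` is an antiderivative of the density, and it takes the
value `t` at `y = sin² (π t / 2)`. Being increasing, the substitution preserves ordinal patterns.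
For the piecewise linear tent map each pattern of `(t, T t, T² t)` occupies an interval with
endpoints among `0, 1/3, 2/5, 2/3, 4/5, 1`, which the substitution sends to
`0, 1/4, (5 - √5)/8, 3/4, (5 + √5)/8, 1`; the probabilities are the lengths of these intervals.
-/

open Set Function

noncomputable def tentMap (t : ℝ) : ℝ := 1 - |1 - 2 * t|

noncomputable def logisticConj (t : ℝ) : ℝ := (1 - cos (π * t)) / 2

theorem semiconj_logisticConj : Semiconj logisticConj tentMap logisticMap := by
  intro t
  have h : cos (π * tentMap t) = cos (2 * (π * t)) := by
    have : π * tentMap t = π - |π - 2 * (π * t)| := by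
      rw [tentMap, show π - 2 * (π * t) = π * (1 - 2 * t) by ring, abs_mul, abs_of_pos pi_pos]
      ring
    rw [this, cos_pi_sub, cos_abs, cos_pi_sub, neg_neg]
  rw [logisticConj, logisticConj, logisticMap, h, cos_two_mul]
  ring

theorem mapsTo_tentMap : MapsTo tentMap (Icc 0 1) (Icc 0 1) := by
  intro t ⟨h0, h1⟩
  constructor <;> simp only [tentMap] <;> cases abs_cases (1 - 2 * t) <;> linarith

theorem strictMonoOn_logisticConj : StrictMonoOn logisticConj (Icc 0 1) := by
  intro s hs t ht hst
  have hmem : ∀ u ∈ Icc (0 : ℝ) 1, π * u ∈ Icc 0 π := fun u ⟨h0, h1⟩ =>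
    ⟨by positivity, by nlinarith [pi_pos]⟩
  have := strictAntiOn_cos (hmem s hs) (hmem t ht) (by nlinarith [pi_pos])
  simp only [logisticConj]
  linarith

theorem logisticConj_zero : logisticConj 0 = 0 := by simp [logisticConj]

theorem logisticConj_one : logisticConj 1 = 1 := by norm_num [logisticConj]

theorem logisticConj_one_third : logisticConj (1 / 3) = 1 / 4 := by
  rw [logisticConj, show π * (1 / 3) = π / 3 by ring, cos_pi_div_three]
  norm_num

theorem logisticConj_two_thirds : logisticConj (2 / 3) = 3 / 4 := by
  rw [logisticConj, show π * (2 / 3) = π - π / 3 by ring, cos_pi_sub, cos_pi_div_three]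
  norm_num

theorem logisticConj_two_fifths : logisticConj (2 / 5) = (5 - √5) / 8 := by
  rw [logisticConj, show π * (2 / 5) = 2 * (π / 5) by ring, cos_two_mul, cos_pi_div_five]
  nlinarith [sq_sqrt (show (0 : ℝ) ≤ 5 by norm_num)]

theorem logisticConj_four_fifths : logisticConj (4 / 5) = (5 + √5) / 8 := by
  rw [logisticConj, show π * (4 / 5) = π - π / 5 by ring, cos_pi_sub, cos_pi_div_five]
  ring

theorem logisticConj_mem_Icc (t : ℝ) : logisticConj t ∈ Icc 0 1 := by
  constructor <;> simp only [logisticConj] <;>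
    linarith [neg_one_le_cos (π * t), cos_le_one (π * t)]

theorem surjOn_logisticConj : SurjOn logisticConj (Ioo 0 1) (Ioo 0 1) := by
  have := intermediate_value_Ioo zero_le_one (f := logisticConj)
    (by unfold logisticConj; fun_prop)
  rwa [logisticConj_zero, logisticConj_one] at this

theorem hasDerivAt_arccos_one_sub_two_mul_div_pi {y : ℝ} (hy : y ∈ Ioo 0 1) :
    HasDerivAt (fun y => arccos (1 - 2 * y) / π) (logisticDensity y) y := by
  obtain ⟨h0, h1⟩ := hy
  have hd := ((hasDerivAt_arccos (x := 1 - 2 * y) (by linarith) (by linarith)).comp y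
    (((hasDerivAt_id y).const_mul 2).const_sub 1)).div_const π
  refine hd.congr_deriv ?_
  have h4 : √(1 - (1 - 2 * y) ^ 2) = 2 * √(y * (1 - y)) := by
    rw [show 1 - (1 - 2 * y) ^ 2 = 2 ^ 2 * (y * (1 - y)) by ring, sqrt_mul (by norm_num),
      sqrt_sq (by norm_num)]
  have : 0 < √(y * (1 - y)) := sqrt_pos.mpr (by nlinarith)
  rw [logisticDensity, h4]
  field_simp

theorem integral_logisticDensity {a b : ℝ} (ha : 0 ≤ a) (hab : a ≤ b) (hb : b ≤ 1) :
    ∫ y in a..b, logisticDensity y = (arccos (1 - 2 * b) - arccos (1 - 2 * a)) / π := by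
  have hcont : ContinuousOn (fun y => arccos (1 - 2 * y) / π) (Icc a b) := by fun_prop
  have hderiv :
      ∀ y ∈ Ioo a b, HasDerivAt (fun y => arccos (1 - 2 * y) / π) (logisticDensity y) y :=
    fun y hy => hasDerivAt_arccos_one_sub_two_mul_div_pi ⟨ha.trans_lt hy.1, hy.2.trans_le hb⟩
  have hpos : ∀ y ∈ Ioo a b, 0 ≤ logisticDensity y := fun y _ => by
    unfold logisticDensity; positivity
  rw [intervalIntegral.integral_eq_sub_of_hasDerivAt_of_le hab hcont hderiv
    ((intervalIntegrable_iff_integrableOn_Ioc_of_le hab).2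
      (intervalIntegral.integrableOn_deriv_of_nonneg hcont hderiv hpos))]
  ring

theorem arccos_one_sub_two_mul_logisticConj {t : ℝ} (h0 : 0 ≤ t) (h1 : t ≤ 1) :
    arccos (1 - 2 * logisticConj t) = π * t := by
  rw [logisticConj, show 1 - 2 * ((1 - cos (π * t)) / 2) = cos (π * t) by ring,
    arccos_cos (by positivity) (by nlinarith [pi_pos])]

theorem integral_logisticDensity_logisticConj {s t : ℝ} (hs : 0 ≤ s) (hst : s ≤ t)
    (ht : t ≤ 1) :
    ∫ y in logisticConj s..logisticConj t, logisticDensity y = t - s := by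
  rw [integral_logisticDensity (logisticConj_mem_Icc s).1
    (strictMonoOn_logisticConj.monotoneOn ⟨hs, hst.trans ht⟩ ⟨hs.trans hst, ht⟩ hst)
    (logisticConj_mem_Icc t).2, arccos_one_sub_two_mul_logisticConj (hs.trans hst) ht,
    arccos_one_sub_two_mul_logisticConj hs (hst.trans ht)]
  field_simp

theorem setIntegral_Ioo_logisticDensity_logisticConj {s t : ℝ} (hs : 0 ≤ s) (hst : s ≤ t)
    (ht : t ≤ 1) :
    ∫ y in Ioo (logisticConj s) (logisticConj t), logisticDensity y = t - s := by
  rw [← integral_Ioc_eq_integral_Ioo, ← intervalIntegral.integral_of_le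
    (strictMonoOn_logisticConj.monotoneOn ⟨hs, hst.trans ht⟩ ⟨hs.trans hst, ht⟩ hst),
    integral_logisticDensity_logisticConj hs hst ht]

theorem logisticMap_pattern_eq_Ioo (i j k : ℕ) {a b : ℝ} (ha : 0 ≤ a) (hab : a ≤ b)
    (hb : b ≤ 1)
    (h : {t ∈ Ioo (0 : ℝ) 1 | tentMap^[i] t < tentMap^[j] t ∧ tentMap^[j] t < tentMap^[k] t}
      = Ioo a b) :
    {y ∈ Ioo (0 : ℝ) 1 |
        logisticMap^[i] y < logisticMap^[j] y ∧ logisticMap^[j] y < logisticMap^[k] y}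
      = Ioo (logisticConj a) (logisticConj b) := by
  ext y
  by_cases hy : y ∈ Ioo 0 1
  · obtain ⟨t, ht, rfl⟩ := surjOn_logisticConj hy
    have hIcc : ∀ n, tentMap^[n] t ∈ Icc 0 1 :=
      fun n => mapsTo_tentMap.iterate n (Ioo_subset_Icc_self ht)
    have hlt : ∀ m n, logisticMap^[m] (logisticConj t) < logisticMap^[n] (logisticConj t) ↔
        tentMap^[m] t < tentMap^[n] t := by
      intro m n
      rw [← (semiconj_logisticConj.iterate_right m).eq,
        ← (semiconj_logisticConj.iterate_right n).eq]
      exact strictMonoOn_logisticConj.lt_iff_lt (hIcc m) (hIcc n)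
    have hIoo : logisticConj t ∈ Ioo (logisticConj a) (logisticConj b) ↔ t ∈ Ioo a b := by
      have htIcc := Ioo_subset_Icc_self ht
      rw [mem_Ioo, mem_Ioo, strictMonoOn_logisticConj.lt_iff_lt ⟨ha, hab.trans hb⟩ htIcc,
        strictMonoOn_logisticConj.lt_iff_lt htIcc ⟨ha.trans hab, hb⟩]
    rw [hIoo, ← h]
    simp only [mem_sep_iff, hy, ht, hlt]
  · have hsub : Ioo (logisticConj a) (logisticConj b) ⊆ Ioo 0 1 :=
      Ioo_subset_Ioo (logisticConj_mem_Icc a).1 (logisticConj_mem_Icc b).2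
    simp only [mem_sep_iff, hy, false_and, false_iff]
    exact fun h' => hy (hsub h')

theorem tentMap_pattern_012 :
    {t ∈ Ioo (0 : ℝ) 1 | t < tentMap t ∧ tentMap t < tentMap (tentMap t)}
      = Ioo 0 (1 / 3) := by
  ext t
  simp only [mem_Ioo, tentMap]
  grind (splits := 20)

theorem tentMap_pattern_021 :
    {t ∈ Ioo (0 : ℝ) 1 | t < tentMap (tentMap t) ∧ tentMap (tentMap t) < tentMap t}
      = Ioo (1 / 3) (2 / 5) := by
  ext t
  simp only [mem_Ioo, tentMap]
  grind (splits := 20)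

theorem tentMap_pattern_201 :
    {t ∈ Ioo (0 : ℝ) 1 | tentMap (tentMap t) < t ∧ t < tentMap t} = Ioo (2 / 5) (2 / 3) := by
  ext t
  simp only [mem_Ioo, tentMap]
  grind (splits := 20)

theorem tentMap_pattern_102 :
    {t ∈ Ioo (0 : ℝ) 1 | tentMap t < t ∧ t < tentMap (tentMap t)} = Ioo (2 / 3) (4 / 5) := by
  ext t
  simp only [mem_Ioo, tentMap]
  grind (splits := 20)

theorem tentMap_pattern_120 :
    {t ∈ Ioo (0 : ℝ) 1 | tentMap t < tentMap (tentMap t) ∧ tentMap (tentMap t) < t}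
      = Ioo (4 / 5) 1 := by
  ext t
  simp only [mem_Ioo, tentMap]
  grind (splits := 20)

theorem tentMap_pattern_210 :
    {t ∈ Ioo (0 : ℝ) 1 | tentMap (tentMap t) < tentMap t ∧ tentMap t < t} = ∅ := by
  ext t
  simp only [mem_Ioo, tentMap]
  grind (splits := 20)

theorem setIntegral_logisticMap_pattern (i j k : ℕ) {a b : ℝ} (ha : 0 ≤ a) (hab : a ≤ b)
    (hb : b ≤ 1)
    (h : {t ∈ Ioo (0 : ℝ) 1 | tentMap^[i] t < tentMap^[j] t ∧ tentMap^[j] t < tentMap^[k] t}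
      = Ioo a b) :
    ∫ y in {y ∈ Ioo (0 : ℝ) 1 |
        logisticMap^[i] y < logisticMap^[j] y ∧ logisticMap^[j] y < logisticMap^[k] y},
      logisticDensity y = b - a := by
  rw [logisticMap_pattern_eq_Ioo i j k ha hab hb h,
    setIntegral_Ioo_logisticDensity_logisticConj ha hab hb]

/-- The five integrals of the invariant density `g(y) = 1/(π √(y(1-y)))` over the
ordinal-pattern intervals equal `1/3, 1/15, 4/15, 2/15, 1/5`; consequently, the
ordinal probabilities of the embedding-dimension-3 permutation patterns of the
logistic map `y ↦ 4y(1-y)` are `(1/3, 1/15, 4/15, 2/15, 1/5, 0)`. -/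
theorem logistic_ordinal_probabilities :
    (∫ y in (0 : ℝ)..(1 / 4), logisticDensity y) = 1 / 3 ∧
    (∫ y in (1 / 4 : ℝ)..((5 - Real.sqrt 5) / 8), logisticDensity y) = 1 / 15 ∧
    (∫ y in ((5 - Real.sqrt 5) / 8 : ℝ)..(3 / 4), logisticDensity y) = 4 / 15 ∧
    (∫ y in (3 / 4 : ℝ)..((5 + Real.sqrt 5) / 8), logisticDensity y) = 2 / 15 ∧
    (∫ y in ((5 + Real.sqrt 5) / 8 : ℝ)..1, logisticDensity y) = 1 / 5 ∧
    -- ordinal probabilities: the invariant measure of each ordinal-pattern set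
    (∫ y in {y ∈ Set.Ioo (0 : ℝ) 1 |
        y < logisticMap y ∧ logisticMap y < logisticMap (logisticMap y)},
      logisticDensity y) = 1 / 3 ∧
    (∫ y in {y ∈ Set.Ioo (0 : ℝ) 1 |
        y < logisticMap (logisticMap y) ∧ logisticMap (logisticMap y) < logisticMap y},
      logisticDensity y) = 1 / 15 ∧
    (∫ y in {y ∈ Set.Ioo (0 : ℝ) 1 |
        logisticMap (logisticMap y) < y ∧ y < logisticMap y},
      logisticDensity y) = 4 / 15 ∧
    (∫ y in {y ∈ Set.Ioo (0 : ℝ) 1 |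
        logisticMap y < y ∧ y < logisticMap (logisticMap y)},
      logisticDensity y) = 2 / 15 ∧
    (∫ y in {y ∈ Set.Ioo (0 : ℝ) 1 |
        logisticMap y < logisticMap (logisticMap y) ∧ logisticMap (logisticMap y) < y},
      logisticDensity y) = 1 / 5 ∧
    (∫ y in {y ∈ Set.Ioo (0 : ℝ) 1 |
        logisticMap (logisticMap y) < logisticMap y ∧ logisticMap y < y},
      logisticDensity y) = 0 := by
  have hinterval {s t c d : ℝ} (hs : 0 ≤ s) (hst : s ≤ t) (ht : t ≤ 1)
      (hc : logisticConj s = c) (hd : logisticConj t = d) :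
      ∫ y in c..d, logisticDensity y = t - s := by
    rw [← hc, ← hd, integral_logisticDensity_logisticConj hs hst ht]
  refine ⟨?_, ?_, ?_, ?_, ?_, ?_, ?_, ?_, ?_, ?_, ?_⟩
  · exact (hinterval (s := 0) (t := 1 / 3) (by norm_num) (by norm_num) (by norm_num)
      logisticConj_zero logisticConj_one_third).trans (by norm_num)
  · exact (hinterval (s := 1 / 3) (t := 2 / 5) (by norm_num) (by norm_num) (by norm_num)
      logisticConj_one_third logisticConj_two_fifths).trans (by norm_num)
  · exact (hinterval (s := 2 / 5) (t := 2 / 3) (by norm_num) (by norm_num) (by norm_num)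
      logisticConj_two_fifths logisticConj_two_thirds).trans (by norm_num)
  · exact (hinterval (s := 2 / 3) (t := 4 / 5) (by norm_num) (by norm_num) (by norm_num)
      logisticConj_two_thirds logisticConj_four_fifths).trans (by norm_num)
  · exact (hinterval (s := 4 / 5) (t := 1) (by norm_num) (by norm_num) (by norm_num)
      logisticConj_four_fifths logisticConj_one).trans (by norm_num)
  -- `logisticMap^[2] y` unfolds definitionally to `logisticMap (logisticMap y)`.
  · exact (setIntegral_logisticMap_pattern 0 1 2 (by norm_num) (by norm_num) (by norm_num)
      tentMap_pattern_012).trans (by norm_num)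
  · exact (setIntegral_logisticMap_pattern 0 2 1 (by norm_num) (by norm_num) (by norm_num)
      tentMap_pattern_021).trans (by norm_num)
  · exact (setIntegral_logisticMap_pattern 2 0 1 (by norm_num) (by norm_num) (by norm_num)
      tentMap_pattern_201).trans (by norm_num)
  · exact (setIntegral_logisticMap_pattern 1 0 2 (by norm_num) (by norm_num) (by norm_num)
      tentMap_pattern_102).trans (by norm_num)
  · exact (setIntegral_logisticMap_pattern 1 2 0 (by norm_num) (by norm_num) (by norm_num)
      tentMap_pattern_120).trans (by norm_num)
  · exact (setIntegral_logisticMap_pattern 2 1 0 le_rfl le_rfl zero_le_one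
      (tentMap_pattern_210.trans (Ioo_self 0).symm)).trans (sub_self 0)
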